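/- arXiv:1803.00671 — 11 statements merged into one kernel-verified Lean document; each statement's English description precedes it below -/
import Mathlib

section
/- Let t₁ and t₂ be real numbers with t₁ > 0 and t₂ < 0. Then there is no homeomorphism f : ℝ → ℝ such that f(t₁·x + (1−t₁)·y) = t₂·f(x) + (1−t₂)·f(y) for all x, y ∈ ℝ. That is, the Alexander quandles (ℝ, ∗_{t₁}) and (ℝ, ∗_{t₂}) are not isomorphic as topological quandles. -/
/-- Lemma 3.2: if `t₁ > 0` and `t₂ < 0`, the Alexander quandles `(ℝ, ∗_{t₁})` and
`(ℝ, ∗_{t₂})` are not isomorphic: there is no homeomorphism of `ℝ` intertwining the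
two operations `x ∗_t y = t·x + (1−t)·y`. -/
theorem alexander_quandles_R_not_isomorphic_of_pos_of_neg (t₁ t₂ : ℝ)
    (ht₁ : 0 < t₁) (ht₂ : t₂ < 0) :
    ¬ ∃ f : ℝ ≃ₜ ℝ, ∀ x y : ℝ,
      f (t₁ * x + (1 - t₁) * y) = t₂ * f x + (1 - t₂) * f y := by
  rintro ⟨f, hf⟩
  have hmono := Continuous.strictMono_of_inj f.continuous f.injective
  -- take x = 1, y = 0
  have key := hf 1 0
  simp only [mul_one, mul_zero, add_zero] at key
  -- t₁ * 1 + (1-t₁)*0 = t₁ > 0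
  have h1 : (0:ℝ) < 1 := one_pos
  rcases hmono with hm | ha
  · have hfx : f 0 < f 1 := hm h1
    have hft : f 0 < f t₁ := hm ht₁
    have : t₂ * f 1 + (1 - t₂) * f 0 < f 0 := by nlinarith
    have key' : f t₁ = t₂ * f 1 + (1 - t₂) * f 0 := by
      have := hf 1 0; linarith [this]
    linarith
  · have hfx : f 1 < f 0 := ha h1
    have hft : f t₁ < f 0 := ha ht₁
    have : f 0 < t₂ * f 1 + (1 - t₂) * f 0 := by nlinarith
    have key' : f t₁ = t₂ * f 1 + (1 - t₂) * f 0 := by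
      have := hf 1 0; linarith [this]
    linarith
end

section
/- Let t₁ and t₂ be real numbers with t₁ > 1 and 0 < t₂ < 1. Then there is no homeomorphism f : ℝ → ℝ such that f(t₁·x + (1−t₁)·y) = t₂·f(x) + (1−t₂)·f(y) for all x, y ∈ ℝ. That is, the Alexander quandles (ℝ, ∗_{t₁}) and (ℝ, ∗_{t₂}) are not isomorphic as topological quandles. -/
/-- Lemma 3.4: if `t₁ > 1` and `0 < t₂ < 1`, the Alexander quandles `(ℝ, ∗_{t₁})` and
`(ℝ, ∗_{t₂})` are not isomorphic. -/
theorem alexander_quandles_R_not_isomorphic_of_one_lt_of_lt_one (t₁ t₂ : ℝ)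
    (ht₁ : 1 < t₁) (ht₂ : 0 < t₂) (ht₂' : t₂ < 1) :
    ¬ ∃ f : ℝ ≃ₜ ℝ, ∀ x y : ℝ,
      f (t₁ * x + (1 - t₁) * y) = t₂ * f x + (1 - t₂) * f y := by
  rintro ⟨f, hf⟩
  have key : ∀ x : ℝ, f (t₁ * x) = t₂ * f x + (1 - t₂) * f 0 := fun x => by
    simpa using hf x 0
  have hiter : ∀ n : ℕ, f (t₁ ^ n) = t₂ ^ n * f 1 + (1 - t₂ ^ n) * f 0 := by
    intro n
    induction n with
    | zero => simp
    | succ n ih =>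
      have h := key (t₁ ^ n)
      rw [ih] at h
      rw [pow_succ, mul_comm (t₁ ^ n) t₁, h, pow_succ]
      ring
  have h1 : Filter.Tendsto (fun n : ℕ => (t₁ : ℝ) ^ n) Filter.atTop Filter.atTop :=
    tendsto_pow_atTop_atTop_of_one_lt ht₁
  have h2 : Filter.Tendsto (fun n : ℕ => (t₂ : ℝ) ^ n) Filter.atTop (nhds 0) :=
    tendsto_pow_atTop_nhds_zero_of_lt_one ht₂.le ht₂'
  have h3 : Filter.Tendsto (fun n : ℕ => f (t₁ ^ n)) Filter.atTop (nhds (f 0)) := by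
    have : Filter.Tendsto (fun n : ℕ => t₂ ^ n * f 1 + (1 - t₂ ^ n) * f 0)
        Filter.atTop (nhds (0 * f 1 + (1 - 0) * f 0)) := by
      exact ((h2.mul tendsto_const_nhds).add
        ((tendsto_const_nhds.sub h2).mul tendsto_const_nhds))
    simp only [zero_mul, sub_zero, one_mul, zero_add] at this
    simpa only [hiter] using this
  have h4 : Filter.Tendsto (fun n : ℕ => (t₁ : ℝ) ^ n) Filter.atTop (nhds 0) := by
    have h5 := (f.symm.continuous.tendsto (f 0)).comp h3
    simp only [Function.comp_def, Homeomorph.symm_apply_apply] at h5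
    exact h5
  exact h1.not_tendsto (disjoint_nhds_atTop 0).symm h4
end

section
/- Let t₁ and t₂ be real numbers with t₁ > t₂ > 1. Then there is no homeomorphism f : ℝ → ℝ such that f(t₁·x + (1−t₁)·y) = t₂·f(x) + (1−t₂)·f(y) for all x, y ∈ ℝ. That is, the Alexander quandles (ℝ, ∗_{t₁}) and (ℝ, ∗_{t₂}) are not isomorphic as topological quandles. -/
/-!
Put `g = f - f 0`. The identity `f (s x + (1 - s) y) = t f x + (1 - t) f y` yields the scaling
laws `g (s x) = t g x` and `g ((1 - s) y) = (1 - t) g y`, and `g 1 ≠ 0` by injectivity. For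
`s = 0` (resp. `s = 1`) the first (resp. second) law at `x = 1` already forces `t = s`. Otherwise
the two laws make `g` additive; being continuous, `g` is linear, so `s g 1 = g s = t g 1`.
-/

def IsAlexanderQuandleHom (s t : ℝ) (f : ℝ → ℝ) : Prop :=
  ∀ x y : ℝ, f (s * x + (1 - s) * y) = t * f x + (1 - t) * f y

namespace IsAlexanderQuandleHom

variable {s t : ℝ} {f : ℝ → ℝ}

lemma map_mul_sub_map_zero (hf : IsAlexanderQuandleHom s t f) (x : ℝ) :
    f (s * x) - f 0 = t * (f x - f 0) := by
  have h := hf x 0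
  rw [mul_zero, add_zero] at h
  rw [h]; ring

lemma map_one_sub_mul_sub_map_zero (hf : IsAlexanderQuandleHom s t f) (y : ℝ) :
    f ((1 - s) * y) - f 0 = (1 - t) * (f y - f 0) := by
  have h := hf 0 y
  rw [mul_zero, zero_add] at h
  rw [h]; ring

lemma map_add_sub_map_zero (hf : IsAlexanderQuandleHom s t f) (hs₀ : s ≠ 0) (hs₁ : s ≠ 1)
    (u v : ℝ) : f (u + v) - f 0 = (f u - f 0) + (f v - f 0) := by
  have hs₁' : 1 - s ≠ 0 := sub_ne_zero.mpr hs₁.symm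
  have h := hf (u / s) (v / (1 - s))
  rw [mul_div_cancel₀ _ hs₀, mul_div_cancel₀ _ hs₁'] at h
  rw [← mul_div_cancel₀ u hs₀, map_mul_sub_map_zero hf, ← mul_div_cancel₀ v hs₁',
    map_one_sub_mul_sub_map_zero hf, mul_div_cancel₀ u hs₀, mul_div_cancel₀ v hs₁', h]
  ring

lemma map_sub_map_zero_eq_mul (hf : IsAlexanderQuandleHom s t f) (hcont : Continuous f)
    (hs₀ : s ≠ 0) (hs₁ : s ≠ 1) (x : ℝ) : f x - f 0 = x * (f 1 - f 0) := by
  let g : ℝ →+ ℝ := AddMonoidHom.mk' (fun x => f x - f 0) (map_add_sub_map_zero hf hs₀ hs₁)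
  simpa [g] using map_real_smul g (hcont.sub continuous_const) x 1

theorem eq_of_continuous_of_injective (hf : IsAlexanderQuandleHom s t f) (hcont : Continuous f)
    (hinj : Function.Injective f) : s = t := by
  have h₁ : f 1 - f 0 ≠ 0 := sub_ne_zero.mpr (hinj.ne one_ne_zero)
  have hscale := hf.map_mul_sub_map_zero 1
  rw [mul_one] at hscale
  by_cases hs₀ : s = 0
  · subst hs₀
    rw [sub_self, eq_comm, mul_eq_zero] at hscale
    exact (hscale.resolve_right h₁).symm
  by_cases hs₁ : s = 1
  · subst hs₁
    have h := hf.map_one_sub_mul_sub_map_zero 1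
    rw [sub_self, zero_mul, sub_self, eq_comm, mul_eq_zero, sub_eq_zero] at h
    exact h.resolve_right h₁
  rw [hf.map_sub_map_zero_eq_mul hcont hs₀ hs₁] at hscale
  exact mul_right_cancel₀ h₁ hscale

end IsAlexanderQuandleHom

theorem alexander_quandles_R_not_isomorphic_of_lt_of_one_lt_general (t₁ t₂ : ℝ)
    (ht : t₂ < t₁) :
    ¬ ∃ f : ℝ ≃ₜ ℝ, ∀ x y : ℝ,
      f (t₁ * x + (1 - t₁) * y) = t₂ * f x + (1 - t₂) * f y := by
  rintro ⟨f, hf⟩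
  exact ht.ne' (IsAlexanderQuandleHom.eq_of_continuous_of_injective hf f.continuous f.injective)

/-- Lemma 3.5: if `t₁ > t₂ > 1`, the Alexander quandles `(ℝ, ∗_{t₁})` and `(ℝ, ∗_{t₂})`
are not isomorphic. -/
theorem alexander_quandles_R_not_isomorphic_of_lt_of_one_lt (t₁ t₂ : ℝ)
    (ht₂ : 1 < t₂) (ht : t₂ < t₁) :
    ¬ ∃ f : ℝ ≃ₜ ℝ, ∀ x y : ℝ,
      f (t₁ * x + (1 - t₁) * y) = t₂ * f x + (1 - t₂) * f y :=
  alexander_quandles_R_not_isomorphic_of_lt_of_one_lt_general t₁ t₂ ht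
end

section
/- Let t₁ and t₂ be two distinct nonzero real numbers. Then the Alexander quandles (ℝ, ∗_{t₁}) and (ℝ, ∗_{t₂}) are not isomorphic as topological quandles: there is no homeomorphism f : ℝ → ℝ such that f(t₁·x + (1−t₁)·y) = t₂·f(x) + (1−t₂)·f(y) for all x, y ∈ ℝ. -/
/-!
Subtracting `f 0` from a continuous solution `f` of
`f (t x + (1 - t) y) = s f x + (1 - s) f y` with `t ≠ 0, 1` gives a map that is additive, since
`u + v = t (u / t) + (1 - t) (v / (1 - t))`, hence `ℝ`-linear by continuity. So `f` is affine,
`f x = f 0 + x (f 1 - f 0)`, and evaluating at `x = t` (trivially true also for `t = 0, 1`)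
against the equation at `(1, 0)` gives `t (f 1 - f 0) = s (f 1 - f 0)`. Injectivity makes
`f 1 - f 0 ≠ 0`, so `t = s`.
-/

variable {K E F : Type*}

/-- `f` is a quandle homomorphism from the Alexander quandle `(E, ∗_t)` to `(F, ∗_s)`. -/
def IsAlexanderHom (K) [Ring K] [AddCommGroup E] [Module K E] [AddCommGroup F]
    [Module K F] (t s : K) (f : E → F) : Prop :=
  ∀ x y, f (t • x + (1 - t) • y) = s • f x + (1 - s) • f y

namespace IsAlexanderHom

section Field

variable [Field K] [AddCommGroup E] [Module K E] [AddCommGroup F] [Module K F]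
  {t s : K} {f : E → F}

theorem sub_const (h : IsAlexanderHom K t s f) (c : F) :
    IsAlexanderHom K t s (fun x ↦ f x - c) := by
  intro x y
  dsimp only
  rw [h x y]
  module

theorem map_add (h : IsAlexanderHom K t s f) (hf₀ : f 0 = 0) (ht₀ : t ≠ 0) (ht₁ : t ≠ 1)
    (u v : E) : f (u + v) = f u + f v := by
  have ht₁' : 1 - t ≠ 0 := sub_ne_zero.mpr (Ne.symm ht₁)
  have hleft (u : E) : f (t • u) = s • f u := by simpa [hf₀] using h u 0
  have hright (v : E) : f ((1 - t) • v) = (1 - s) • f v := by simpa [hf₀] using h 0 v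
  have hu : t • t⁻¹ • u = u := smul_inv_smul₀ ht₀ u
  have hv : (1 - t) • (1 - t)⁻¹ • v = v := smul_inv_smul₀ ht₁' v
  calc f (u + v) = f (t • t⁻¹ • u + (1 - t) • (1 - t)⁻¹ • v) := by rw [hu, hv]
    _ = f (t • t⁻¹ • u) + f ((1 - t) • (1 - t)⁻¹ • v) := by rw [h, hleft, hright]
    _ = f u + f v := by rw [hu, hv]

end Field

section Real

variable [AddCommGroup F] [Module ℝ F] [TopologicalSpace F] [IsTopologicalAddGroup F]
  [ContinuousSMul ℝ F] [T2Space F] {t s : ℝ} {f : ℝ → F}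

theorem eq_affine (h : IsAlexanderHom ℝ t s f) (hf : Continuous f) (ht₀ : t ≠ 0) (ht₁ : t ≠ 1)
    (x : ℝ) : f x = f 0 + x • (f 1 - f 0) := by
  let g : ℝ →+ F := AddMonoidHom.mk' (fun x ↦ f x - f 0)
    ((h.sub_const (f 0)).map_add (sub_self _) ht₀ ht₁)
  have hx : g (x • 1) = x • g 1 := map_real_smul g (hf.sub continuous_const) x 1
  simp only [g, AddMonoidHom.mk'_apply, smul_eq_mul, mul_one] at hx
  rw [← hx, add_sub_cancel]

theorem apply_param (h : IsAlexanderHom ℝ t s f) (hf : Continuous f) :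
    f t = f 0 + t • (f 1 - f 0) := by
  rcases eq_or_ne t 0 with rfl | ht₀
  · simp
  rcases eq_or_ne t 1 with rfl | ht₁
  · simp
  exact h.eq_affine hf ht₀ ht₁ t

theorem param_eq (h : IsAlexanderHom ℝ t s f) (hf : Continuous f) (hf₀₁ : f 0 ≠ f 1) :
    t = s := by
  have hs : f t = f 0 + s • (f 1 - f 0) := by
    simpa using (h 1 0).trans (by module)
  refine smul_left_injective ℝ (sub_ne_zero.mpr hf₀₁.symm) ?_
  simpa [hs] using (h.apply_param hf).symm

end Real

end IsAlexanderHom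

theorem alexander_quandles_R_not_isomorphic_general (t₁ t₂ : ℝ)
    (hne : t₁ ≠ t₂) :
    ¬ ∃ f : ℝ ≃ₜ ℝ, ∀ x y : ℝ,
      f (t₁ * x + (1 - t₁) * y) = t₂ * f x + (1 - t₂) * f y := by
  rintro ⟨f, hf⟩
  have hhom : IsAlexanderHom ℝ t₁ t₂ f := hf
  exact hne (hhom.param_eq f.continuous (f.injective.ne zero_ne_one))

/-- Theorem 3.7: for distinct nonzero reals `t₁ ≠ t₂`, the Alexander quandles
`(ℝ, ∗_{t₁})` and `(ℝ, ∗_{t₂})` are not isomorphic as topological quandles. -/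
theorem alexander_quandles_R_not_isomorphic (t₁ t₂ : ℝ)
    (ht₁ : t₁ ≠ 0) (ht₂ : t₂ ≠ 0) (hne : t₁ ≠ t₂) :
    ¬ ∃ f : ℝ ≃ₜ ℝ, ∀ x y : ℝ,
      f (t₁ * x + (1 - t₁) * y) = t₂ * f x + (1 - t₂) * f y :=
  alexander_quandles_R_not_isomorphic_general t₁ t₂ hne
end

section
/- Let t₁ and t₂ be real numbers with 0 < t₁ ≤ 1 and 0 < t₂ ≤ 1. Suppose f : [0,1] → [0,1] is a strictly increasing continuous bijection (an orientation-preserving homeomorphism of the closed unit interval) with f(0) = 0 and f(1) = 1 satisfying f(t₁·a + (1−t₁)·b) = t₂·f(a) + (1−t₂)·f(b) for all a, b ∈ [0,1]. Then t₁ = t₂. (Consequently, the Alexander quandle structures on the circle S¹ given by e^{iθ₁} ∗ e^{iθ₂} = e^{i(t·θ₁+(1−t)·θ₂)} for distinct parameters t₁ ≠ t₂ in (0,1] are non-isomorphic.) -/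
/-- Corollary 3.9 (key step): let `0 < t₁ ≤ 1` and `0 < t₂ ≤ 1`. If
`f : [0,1] → [0,1]` is a strictly increasing continuous bijection of the closed
unit interval with `f 0 = 0`, `f 1 = 1`, and
`f (t₁·a + (1−t₁)·b) = t₂·f a + (1−t₂)·f b` for all `a, b ∈ [0,1]`, then `t₁ = t₂`. -/
theorem alexander_circle_quandle_param_eq (t₁ t₂ : ℝ)
    (ht₁ : 0 < t₁) (ht₁' : t₁ ≤ 1) (ht₂ : 0 < t₂) (ht₂' : t₂ ≤ 1)
    (f : ℝ → ℝ)
    (hmaps : Set.MapsTo f (Set.Icc 0 1) (Set.Icc 0 1))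
    (hmono : StrictMonoOn f (Set.Icc 0 1))
    (hcont : ContinuousOn f (Set.Icc 0 1))
    (hbij : Set.BijOn f (Set.Icc 0 1) (Set.Icc 0 1))
    (h0 : f 0 = 0) (h1 : f 1 = 1)
    (hfe : ∀ a ∈ Set.Icc (0:ℝ) 1, ∀ b ∈ Set.Icc (0:ℝ) 1,
      f (t₁ * a + (1 - t₁) * b) = t₂ * f a + (1 - t₂) * f b) :
    t₁ = t₂ := by
  have h01 : (0:ℝ) ∈ Set.Icc (0:ℝ) 1 := by constructor <;> norm_num
  have h11 : (1:ℝ) ∈ Set.Icc (0:ℝ) 1 := by constructor <;> norm_num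
  -- f t₁ = t₂
  have hft₁ : f t₁ = t₂ := by
    have := hfe 1 h11 0 h01
    simpa [h0, h1] using this
  rcases eq_or_lt_of_le ht₁' with h | ht₁lt
  · -- t₁ = 1
    rw [h] at hft₁ ⊢; rw [h1] at hft₁; exact hft₁
  · -- t₁ < 1
    have h1t₁ : 0 < 1 - t₁ := by linarith
    -- key: increments of f are constant
    have key : ∀ h : ℝ, 0 < h → t₁ * h ≤ 1 - t₁ → ∀ a : ℝ, h ≤ a → a ≤ 1 →
        t₂ * (f a - f (a - h)) = (1 - t₂) * f (t₁ * h / (1 - t₁)) := by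
      intro h hh hhle a ha ha1
      have hk0 : 0 ≤ t₁ * h / (1 - t₁) := by positivity
      have hk1 : t₁ * h / (1 - t₁) ≤ 1 := by
        rw [div_le_one h1t₁]; linarith
      have ha0 : 0 ≤ a := le_trans (le_of_lt hh) ha
      have e1 := hfe a ⟨ha0, ha1⟩ 0 h01
      have e2 := hfe (a - h) ⟨by linarith, by linarith⟩ (t₁ * h / (1 - t₁)) ⟨hk0, hk1⟩
      have harg : t₁ * a + (1 - t₁) * 0 = t₁ * (a - h) + (1 - t₁) * (t₁ * h / (1 - t₁)) := by
        field_simp; ring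
      rw [harg] at e1
      rw [e2, h0] at e1
      linarith
    -- for suitable n, f(j/n) = j/n
    have main : ∀ n : ℕ, 1 ≤ n → t₁ ≤ (n : ℝ) * (1 - t₁) → ∀ j : ℕ, j ≤ n →
        f ((j : ℝ) / n) = (j : ℝ) / n := by
      intro n hn1 hnt j hj
      have hnpos : (0:ℝ) < n := by exact_mod_cast hn1
      have hhpos : (0:ℝ) < 1 / n := by positivity
      have hhle : t₁ * (1 / n) ≤ 1 - t₁ := by
        rw [mul_one_div, div_le_iff₀ hnpos]; linarith [mul_comm (1 - t₁) (n:ℝ)]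
      -- step: f((j+1)/n) - f(j/n) = f(1/n)
      have step : ∀ j : ℕ, j + 1 ≤ n →
          f (((j : ℝ) + 1) / n) - f ((j : ℝ) / n) = f (1 / n) := by
        intro j hjn
        have hjn' : ((j : ℝ) + 1) ≤ n := by exact_mod_cast hjn
        have e1 := key (1/n) hhpos hhle (((j:ℝ)+1)/n) (by
            rw [div_le_div_iff₀ hnpos hnpos]; nlinarith [Nat.cast_nonneg (α := ℝ) j])
          (by rw [div_le_one hnpos]; exact hjn')
        have e2 := key (1/n) hhpos hhle (1/n) le_rfl (by
            rw [div_le_one hnpos]; exact_mod_cast hn1)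
        have harg : ((j:ℝ)+1)/n - 1/n = (j:ℝ)/n := by ring
        rw [harg] at e1
        rw [sub_self, h0, sub_zero] at e2
        have := e1.trans e2.symm
        have ht₂ne : t₂ ≠ 0 := ne_of_gt ht₂
        field_simp at this ⊢
        nlinarith [this]
      -- induction: f(j/n) = j * f(1/n)
      have hval : ∀ j : ℕ, j ≤ n → f ((j : ℝ) / n) = (j : ℝ) * f (1 / n) := by
        intro j hj
        induction j with
        | zero => simpa using h0
        | succ k ih =>
          have hk : k ≤ n := Nat.le_of_succ_le hj
          have := step k hj
          have ihk := ih hk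
          push_cast
          push_cast at this ihk
          linarith
      have hn : f ((n : ℝ) / n) = (n : ℝ) * f (1 / n) := hval n le_rfl
      rw [div_self (ne_of_gt hnpos), h1] at hn
      have hfn : f (1 / n) = 1 / n := by
        field_simp
        linarith [hn]
      have := hval j hj
      rw [hfn] at this
      rw [this]; ring
    -- |f t₁ - t₁| ≤ 1/n for all large n
    have hbound : ∀ n : ℕ, 1 ≤ n → t₁ ≤ (n : ℝ) * (1 - t₁) → |f t₁ - t₁| ≤ 1 / n := by
      intro n hn1 hnt
      have hnpos : (0:ℝ) < n := by exact_mod_cast hn1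
      set j : ℕ := ⌊(n : ℝ) * t₁⌋₊ with hjdef
      have hjle : (j : ℝ) ≤ (n : ℝ) * t₁ := Nat.floor_le (by positivity)
      have hjlt : (n : ℝ) * t₁ < (j : ℝ) + 1 := Nat.lt_floor_add_one _
      have hjn : j + 1 ≤ n := by
        have : (n : ℝ) * t₁ < n := by nlinarith
        have hj_lt : (j : ℝ) < n := lt_of_le_of_lt hjle this
        have : j < n := by exact_mod_cast hj_lt
        omega
      have hjn' : ((j : ℝ) + 1) ≤ n := by exact_mod_cast hjn
      have hlow : (j : ℝ) / n ≤ t₁ := by rw [div_le_iff₀ hnpos]; nlinarith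
      have hhigh : t₁ ≤ ((j : ℝ) + 1) / n := by rw [le_div_iff₀ hnpos]; nlinarith
      have hv1 := main n hn1 hnt j (le_of_lt (Nat.lt_of_succ_le hjn))
      have hv2 := main n hn1 hnt (j + 1) hjn
      have ht₁mem : t₁ ∈ Set.Icc (0:ℝ) 1 := ⟨le_of_lt ht₁, ht₁'⟩
      have hmem1 : (j : ℝ) / n ∈ Set.Icc (0:ℝ) 1 := by
        constructor
        · positivity
        · rw [div_le_one hnpos]; linarith
      have hmem2 : ((j : ℝ) + 1) / n ∈ Set.Icc (0:ℝ) 1 := by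
        constructor
        · positivity
        · rw [div_le_one hnpos]; exact hjn'
      have hmono' := hmono.monotoneOn
      have hle1 : f ((j : ℝ) / n) ≤ f t₁ := hmono' hmem1 ht₁mem hlow
      have hle2 : f t₁ ≤ f (((j : ℝ) + 1) / n) := hmono' ht₁mem hmem2 hhigh
      rw [hv1] at hle1
      have hv2' : f (((j:ℝ)+1)/n) = ((j:ℝ)+1)/n := by
        have := hv2; push_cast at this; convert this using 2 <;> push_cast <;> ring
      rw [hv2'] at hle2
      have hsplit : ((j:ℝ)+1)/n = (j:ℝ)/n + 1/n := by ring
      rw [abs_le]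
      constructor
      · linarith [hlow, hle2, hsplit]
      · linarith [hhigh, hle1, hsplit]
    -- conclude f t₁ = t₁
    have hft : f t₁ = t₁ := by
      by_contra hne
      have hpos : 0 < |f t₁ - t₁| := abs_pos.mpr (sub_ne_zero.mpr hne)
      obtain ⟨m, hm⟩ := exists_nat_one_div_lt hpos
      set N : ℕ := max (m + 1) (max 1 (⌈t₁ / (1 - t₁)⌉₊ + 1)) with hNdef
      have hN1 : 1 ≤ N := le_trans (le_max_left _ _) (le_max_right _ _)
      have hNm : m + 1 ≤ N := le_max_left _ _
      have hNc : ⌈t₁ / (1 - t₁)⌉₊ + 1 ≤ N := le_trans (le_max_right _ _) (le_max_right _ _)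
      have hNt : t₁ ≤ (N : ℝ) * (1 - t₁) := by
        have h1 : t₁ / (1 - t₁) ≤ (⌈t₁ / (1 - t₁)⌉₊ : ℝ) := Nat.le_ceil _
        have h2 : ((⌈t₁ / (1 - t₁)⌉₊ : ℕ) : ℝ) ≤ (N : ℝ) := by exact_mod_cast le_trans (Nat.le_succ _) hNc
        have : t₁ / (1 - t₁) ≤ (N : ℝ) := le_trans h1 h2
        rw [div_le_iff₀ h1t₁] at this
        linarith
      have hb := hbound N hN1 hNt
      have : 1 / (N : ℝ) ≤ 1 / ((m : ℝ) + 1) := by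
        apply one_div_le_one_div_of_le
        · positivity
        · exact_mod_cast hNm
      linarith
    rw [hft] at hft₁
    exact hft₁
end

section
/- Let ∗ be a topological quandle structure on the closed unit interval [0,1]: a continuous binary operation ∗ : [0,1] × [0,1] → [0,1] with x ∗ x = x for all x, (x ∗ y) ∗ z = (x ∗ z) ∗ (y ∗ z) for all x, y, z, and such that each right translation R_x : y ↦ y ∗ x is a homeomorphism of [0,1]. Then 0 ∗ x = 0 and 1 ∗ x = 1 for every x ∈ [0,1]. -/
private lemma preconn_Ioi : IsPreconnected (Set.Ioi (0:unitInterval)) := by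
  rw [← Topology.IsInducing.subtypeVal.isPreconnected_image]
  have : Subtype.val '' (Set.Ioi (0:unitInterval)) = Set.Ioc (0:ℝ) 1 := by
    ext y
    simp only [Set.mem_image, Set.mem_Ioi, Set.mem_Ioc]
    constructor
    · rintro ⟨⟨x, hx⟩, h1, rfl⟩
      exact ⟨by exact_mod_cast h1, hx.2⟩
    · rintro ⟨h1, h2⟩
      exact ⟨⟨y, le_of_lt h1, h2⟩, by exact_mod_cast h1, rfl⟩
  rw [this]
  exact isPreconnected_Ioc

private lemma preconn_Iio : IsPreconnected (Set.Iio (1:unitInterval)) := by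
  rw [← Topology.IsInducing.subtypeVal.isPreconnected_image]
  have : Subtype.val '' (Set.Iio (1:unitInterval)) = Set.Ico (0:ℝ) 1 := by
    ext y
    simp only [Set.mem_image, Set.mem_Iio, Set.mem_Ico]
    constructor
    · rintro ⟨⟨x, hx⟩, h1, rfl⟩
      exact ⟨hx.1, by exact_mod_cast h1⟩
    · rintro ⟨h1, h2⟩
      exact ⟨⟨y, h1, le_of_lt h2⟩, by exact_mod_cast h2, rfl⟩
  rw [this]
  exact isPreconnected_Ico

private lemma compl_zero : ({(0:unitInterval)}ᶜ : Set unitInterval) = Set.Ioi 0 := by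
  ext x
  simp only [Set.mem_compl_iff, Set.mem_singleton_iff, Set.mem_Ioi]
  constructor
  · intro hx; exact lt_of_le_of_ne x.2.1 (Ne.symm hx)
  · intro hx hx'; exact hx.ne' hx'

private lemma compl_one : ({(1:unitInterval)}ᶜ : Set unitInterval) = Set.Iio 1 := by
  ext x
  simp only [Set.mem_compl_iff, Set.mem_singleton_iff, Set.mem_Iio]
  constructor
  · intro hx; exact lt_of_le_of_ne x.2.2 hx
  · intro hx hx'; exact (ne_of_lt hx) hx'

private lemma homeo_endpoint (e : unitInterval ≃ₜ unitInterval) (c : unitInterval)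
    (hc : ({c}ᶜ : Set unitInterval) = Set.Ioi 0 ∨ ({c}ᶜ : Set unitInterval) = Set.Iio 1) :
    e c = 0 ∨ e c = 1 := by
  by_contra h
  push_neg at h
  obtain ⟨h0, h1⟩ := h
  have hpre : IsPreconnected ({c}ᶜ : Set unitInterval) := by
    rcases hc with hc | hc
    · rw [hc]; exact preconn_Ioi
    · rw [hc]; exact preconn_Iio
  have himg : IsPreconnected (e '' {c}ᶜ) := hpre.image e e.continuous.continuousOn
  have heq : e '' {c}ᶜ = {e c}ᶜ := by
    rw [Set.image_compl_eq e.bijective, Set.image_singleton]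
  rw [heq] at himg
  have hord := himg.ordConnected
  have h0mem : (0 : unitInterval) ∈ ({e c}ᶜ : Set unitInterval) := by
    simp only [Set.mem_compl_iff, Set.mem_singleton_iff]
    exact fun hh => h0 hh.symm
  have h1mem : (1 : unitInterval) ∈ ({e c}ᶜ : Set unitInterval) := by
    simp only [Set.mem_compl_iff, Set.mem_singleton_iff]
    exact fun hh => h1 hh.symm
  have : e c ∈ ({e c}ᶜ : Set unitInterval) :=
    hord.out h0mem h1mem ⟨(e c).2.1, (e c).2.2⟩
  exact this rfl

private lemma const_endpoint (f : unitInterval → unitInterval) (hf : Continuous f)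
    (c c' : unitInterval) (hne : c ≠ c')
    (hval : ∀ x, f x = c ∨ f x = c') (x0 : unitInterval) (hc : f x0 = c) :
    ∀ x, f x = c := by
  have hcompl : (f ⁻¹' {c})ᶜ = f ⁻¹' {c'} := by
    ext x
    simp only [Set.mem_compl_iff, Set.mem_preimage, Set.mem_singleton_iff]
    constructor
    · intro hx; rcases hval x with h | h
      · exact absurd h hx
      · exact h
    · intro hx hx'; exact hne (hx' ▸ hx ▸ rfl)
  have hclopen : IsClopen (f ⁻¹' {c}) := by
    constructor
    · exact isClosed_singleton.preimage hf
    · rw [← compl_compl (f ⁻¹' {c}), hcompl]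
      exact (isClosed_singleton.preimage hf).isOpen_compl
  have huniv : f ⁻¹' {c} = Set.univ :=
    hclopen.eq_univ ⟨x0, hc⟩
  intro x
  have : x ∈ f ⁻¹' {c} := huniv ▸ Set.mem_univ x
  exact this

/-- For any topological quandle structure `∗` on the closed unit interval `[0,1]`,
the endpoints are left fixed: `0 ∗ x = 0` and `1 ∗ x = 1` for every `x ∈ [0,1]`. -/
theorem unitInterval_quandle_fixes_endpoints_left
    (op : unitInterval → unitInterval → unitInterval)
    (hcont : Continuous fun p : unitInterval × unitInterval => op p.1 p.2)
    (hidem : ∀ x, op x x = x)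
    (hdist : ∀ x y z, op (op x y) z = op (op x z) (op y z))
    (hR : ∀ x : unitInterval, ∃ e : unitInterval ≃ₜ unitInterval, ∀ y, e y = op y x) :
    ∀ x : unitInterval, op 0 x = 0 ∧ op 1 x = 1 := by
  have hne : (0:unitInterval) ≠ 1 := by
    intro h
    have := congrArg Subtype.val h
    norm_num at this
  have hc0 : Continuous fun x => op 0 x :=
    hcont.comp (continuous_const.prodMk continuous_id)
  have hc1 : Continuous fun x => op 1 x :=
    hcont.comp (continuous_const.prodMk continuous_id)
  have hval0 : ∀ x, op 0 x = 0 ∨ op 0 x = 1 := by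
    intro x
    obtain ⟨e, he⟩ := hR x
    rw [← he 0]
    exact homeo_endpoint e 0 (Or.inl compl_zero)
  have hval1 : ∀ x, op 1 x = 0 ∨ op 1 x = 1 := by
    intro x
    obtain ⟨e, he⟩ := hR x
    rw [← he 1]
    exact homeo_endpoint e 1 (Or.inr compl_one)
  have h0 : ∀ x, op 0 x = 0 :=
    const_endpoint _ hc0 0 1 hne hval0 0 (hidem 0)
  have h1 : ∀ x, op 1 x = 1 :=
    const_endpoint _ hc1 1 0 hne.symm (fun x => (hval1 x).symm) 1 (hidem 1)
  exact fun x => ⟨h0 x, h1 x⟩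
end

section
/- Let X be a set with a binary operation ∗ satisfying the right distributivity law (a ∗ b) ∗ c = (a ∗ c) ∗ (b ∗ c) for all a, b, c ∈ X, and let e ∈ X be an element such that e ∗ z = e for all z ∈ X and such that the right translation R_e : w ↦ w ∗ e is surjective. If x, y ∈ X satisfy x ∗ e = y, then R_x = R_y, i.e. z ∗ x = z ∗ y for all z ∈ X. -/
/-- Let `∗` be a right-distributive binary operation on `X`, and let `e ∈ X` satisfy
`e ∗ z = e` for all `z`, with the right translation `R_e : w ↦ w ∗ e` surjective.
If `x ∗ e = y`, then `R_x = R_y`, i.e. `z ∗ x = z ∗ y` for all `z`. -/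
theorem right_translation_eq_of_apply_fixed {X : Type*} (op : X → X → X)
    (hdist : ∀ a b c : X, op (op a b) c = op (op a c) (op b c))
    (e : X) (he : ∀ z : X, op e z = e)
    (hsurj : Function.Surjective (fun w => op w e))
    (x y : X) (hxy : op x e = y) :
    ∀ z : X, op z x = op z y := by
  intro z
  obtain ⟨w, hw⟩ := hsurj z
  simp only at hw
  calc op z x = op (op w e) x := by rw [hw]
    _ = op (op w x) (op e x) := hdist w e x
    _ = op (op w x) e := by rw [he]
    _ = op (op w e) (op x e) := hdist w x e
    _ = op z y := by rw [hw, hxy]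
end

section
/- Let P(x,y) be a real polynomial in two variables satisfying the right self-distributivity equation P(P(x,y),z) = P(P(x,z),P(y,z)) for all real numbers x, y, z. Then either there exists a real number a such that P(x,y) = a·x + (1−a)·y for all x, y, or P is a polynomial in the variable x only, i.e. there exists a one-variable real polynomial q with P(x,y) = q(x) for all x, y. -/
/-!
Write `f_y = P(·, y)`. Right distributivity says `f_z ∘ f_y = f_{P(y,z)} ∘ f_z` as polynomials
in `x`. Comparing the coefficients of `x ^ (m * m)`, where `m = deg_x P`, gives
`c(z) c(y)^m = c(P(y,z)) c(z)^m` for the leading coefficient `c ∈ K[y]` of `P` in `x`; read as an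
identity of polynomials in `y`, this forces `c` to be constant.

If `m ≥ 2`, all `f_y` then share degree and leading coefficient, and the formula
`deg (A ∘ B₁ - A ∘ B₂) = (deg A - 1) m + deg (B₁ - B₂)` turns the identity into
`(m - 1) m + deg (f_y - f_z) = deg (f_{P(y,z)} - f_z) m`. This forces first
`deg (f_y - f_z) = 0` and then `f_y = f_z`, so `P` depends on `x` only.

If `m ≤ 1`, then `P(x, y) = c x + h(y)` with `h ∘ h = (1 - c) h + c h(0)`, so `h` is affine, and
evaluating this identity at `0` and `1` pins `h` down.
-/

open Polynomial

namespace Polynomial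

variable {R : Type*}

theorem coeff_comp_mul_of_natDegree_le [Semiring R] {p q : R[X]} {m n : ℕ} (hn : n ≠ 0)
    (hp : p.natDegree ≤ m) (hq : q.natDegree ≤ n) :
    (p.comp q).coeff (m * n) = p.coeff m * q.coeff n ^ m := by
  rw [comp, eval₂_eq_sum_range' C (Nat.lt_succ_of_le hp), finsetSum_coeff,
    Finset.sum_range_succ, Finset.sum_eq_zero, zero_add, coeff_C_mul,
    coeff_pow_of_natDegree_le hq]
  intro i hi
  rw [coeff_C_mul, coeff_eq_zero_of_natDegree_lt (p := q ^ i), mul_zero]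
  calc (q ^ i).natDegree ≤ i * n := natDegree_pow_le_of_le i hq
    _ < m * n := Nat.mul_lt_mul_of_pos_right (Finset.mem_range.mp hi) (Nat.pos_of_ne_zero hn)

theorem natDegree_le_one_of_comp_self_eq [Semiring R] [NoZeroDivisors R] {h : R[X]} {a b : R}
    (H : h.comp h = C a * h + C b) : h.natDegree ≤ 1 := by
  have hle : h.natDegree * h.natDegree ≤ h.natDegree * 1 := by
    rw [← natDegree_comp, H, mul_one]
    exact (natDegree_add_le _ _).trans (max_le (natDegree_C_mul_le _ _) (by simp))
  rcases Nat.eq_zero_or_pos h.natDegree with h0 | hpos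
  · omega
  · exact Nat.le_of_mul_le_mul_left hle hpos

theorem natDegree_eq_zero_of_eval_pow_eq [CommRing R] [IsDomain R] [Infinite R] {p : R[X]}
    {N : ℕ} {a : R} (hN : N ≠ 0) (h : ∀ z, p.eval z ≠ 0 → p.eval z ^ N = a) :
    p.natDegree = 0 := by
  rcases eq_or_ne p 0 with rfl | hp
  · exact natDegree_zero
  have hpow : p ^ N = C a := by
    refine eq_of_infinite_eval_eq _ _ ((finite_setOfPred_isRoot hp).infinite_compl.mono ?_)
    intro z hz
    simp only [Set.mem_ofPred_eq, eval_pow, eval_C]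
    exact h z hz
  have := congrArg natDegree hpow
  rw [natDegree_pow, natDegree_C, mul_eq_zero] at this
  exact this.resolve_left hN

section CompSubComp

variable [CommRing R] {B₁ B₂ : R[X]} {m : ℕ}

theorem comp_sub_comp_eq_mul (A : R[X]) :
    A.comp B₁ - A.comp B₂ = (B₁ - B₂) * ∑ i ∈ Finset.range (A.natDegree + 1),
      C (A.coeff i) * ∑ j ∈ Finset.range i, B₁ ^ j * B₂ ^ (i - 1 - j) := by
  rw [comp, comp, eval₂_eq_sum_range, eval₂_eq_sum_range, ← Finset.sum_sub_distrib,
    Finset.mul_sum]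
  refine Finset.sum_congr rfl fun i _ => ?_
  rw [← mul_sub, ← geom_sum₂_mul]
  ring

theorem natDegree_geom_sum₂_le (h₁ : B₁.natDegree ≤ m) (h₂ : B₂.natDegree ≤ m)
    (i : ℕ) :
    (∑ j ∈ Finset.range i, B₁ ^ j * B₂ ^ (i - 1 - j)).natDegree ≤ (i - 1) * m := by
  refine natDegree_sum_le_of_forall_le _ _ fun j hj => ?_
  have hj := Finset.mem_range.mp hj
  calc (B₁ ^ j * B₂ ^ (i - 1 - j)).natDegree ≤ j * m + (i - 1 - j) * m :=
        natDegree_mul_le_of_le (natDegree_pow_le_of_le j h₁) (natDegree_pow_le_of_le _ h₂)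
    _ = (i - 1) * m := by rw [← add_mul, Nat.add_sub_cancel' (by omega)]

theorem coeff_geom_sum₂_of_natDegree_le (h₁ : B₁.natDegree ≤ m) (h₂ : B₂.natDegree ≤ m)
    (hc : B₁.coeff m = B₂.coeff m) (i : ℕ) :
    (∑ j ∈ Finset.range i, B₁ ^ j * B₂ ^ (i - 1 - j)).coeff ((i - 1) * m) =
      i * B₁.coeff m ^ (i - 1) := by
  rw [finsetSum_coeff, Finset.sum_congr rfl (g := fun _ => B₁.coeff m ^ (i - 1)),
    Finset.sum_const, Finset.card_range, nsmul_eq_mul]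
  intro j hj
  have hj := Finset.mem_range.mp hj
  rw [show (i - 1) * m = j * m + (i - 1 - j) * m by
      rw [← add_mul, Nat.add_sub_cancel' (by omega)],
    coeff_mul_add_eq_of_natDegree_le (natDegree_pow_le_of_le j h₁)
      (natDegree_pow_le_of_le _ h₂), coeff_pow_of_natDegree_le h₁,
    coeff_pow_of_natDegree_le h₂, hc, ← pow_add, Nat.add_sub_cancel' (by omega)]

theorem natDegree_comp_sub_comp [IsDomain R] [CharZero R] {A : R[X]}
    (hm : m ≠ 0) (h₁ : B₁.natDegree = m) (h₂ : B₂.natDegree = m)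
    (hlc : B₁.leadingCoeff = B₂.leadingCoeff) (hA : A.natDegree ≠ 0) (hB : B₁ ≠ B₂) :
    (A.comp B₁ - A.comp B₂).natDegree = (A.natDegree - 1) * m + (B₁ - B₂).natDegree := by
  rw [comp_sub_comp_eq_mul]
  set r := A.natDegree
  set Q := ∑ i ∈ Finset.range (r + 1),
    C (A.coeff i) * ∑ j ∈ Finset.range i, B₁ ^ j * B₂ ^ (i - 1 - j)
  have hc : B₁.coeff m = B₂.coeff m := by rwa [leadingCoeff, leadingCoeff, h₁, h₂] at hlc
  have hG := natDegree_geom_sum₂_le h₁.le h₂.le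
  have hQle : Q.natDegree ≤ (r - 1) * m := natDegree_sum_le_of_forall_le _ _ fun i hi =>
    (natDegree_C_mul_le _ _).trans
      ((hG i).trans (Nat.mul_le_mul_right _ (by have := Finset.mem_range.mp hi; omega)))
  have hQcoeff : Q.coeff ((r - 1) * m) = A.coeff r * (r * B₁.coeff m ^ (r - 1)) := by
    rw [finsetSum_coeff, Finset.sum_range_succ, Finset.sum_eq_zero, zero_add, coeff_C_mul,
      coeff_geom_sum₂_of_natDegree_le h₁.le h₂.le hc]
    intro i hi
    rw [coeff_C_mul]
    rcases i with _ | i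
    · simp
    rw [coeff_eq_zero_of_natDegree_lt ((hG (i + 1)).trans_lt ?_), mul_zero]
    refine Nat.mul_lt_mul_of_pos_right ?_ (Nat.pos_of_ne_zero hm)
    have := Finset.mem_range.mp hi
    omega
  have hQ0 : Q.coeff ((r - 1) * m) ≠ 0 := by
    rw [hQcoeff]
    refine mul_ne_zero ?_ (mul_ne_zero (Nat.cast_ne_zero.mpr hA) (pow_ne_zero _ ?_))
    · exact leadingCoeff_ne_zero.mpr (by rintro rfl; exact hA natDegree_zero)
    · rw [← h₁]
      exact leadingCoeff_ne_zero.mpr (by rintro rfl; exact hm (h₁ ▸ natDegree_zero))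
  have hQdeg : Q.natDegree = (r - 1) * m := le_antisymm hQle (le_natDegree_of_ne_zero hQ0)
  rw [natDegree_mul (sub_ne_zero.mpr hB) (fun h => hQ0 (by rw [h, coeff_zero])),
    hQdeg, add_comm]

end CompSubComp

section Slice

variable {K : Type*} [Field K] (F : K[X][X])

noncomputable def slice (y : K) : K[X] := F.map (evalRingHom y)

theorem coeff_slice (y : K) (i : ℕ) : (F.slice y).coeff i = (F.coeff i).eval y :=
  coeff_map _ _

theorem natDegree_slice_le (y : K) : (F.slice y).natDegree ≤ F.natDegree :=
  natDegree_map_le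

variable {F} in
theorem natDegree_slice {y : K} (hy : F.leadingCoeff.eval y ≠ 0) :
    (F.slice y).natDegree = F.natDegree :=
  natDegree_map_of_leadingCoeff_ne_zero _ hy

variable {F} in
theorem leadingCoeff_slice {y : K} (hy : F.leadingCoeff.eval y ≠ 0) :
    (F.slice y).leadingCoeff = F.leadingCoeff.eval y :=
  leadingCoeff_map_of_leadingCoeff_ne_zero _ hy

def IsRightSelfDistrib : Prop :=
  ∀ x y z : K, (F.slice z).eval ((F.slice y).eval x) =
    (F.slice ((F.slice z).eval y)).eval ((F.slice z).eval x)

end Slice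

namespace IsRightSelfDistrib

variable {K : Type*} [Field K] [CharZero K] {F : K[X][X]}

theorem slice_comp_slice (hF : F.IsRightSelfDistrib) (y z : K) :
    (F.slice z).comp (F.slice y) = (F.slice ((F.slice z).eval y)).comp (F.slice z) :=
  Polynomial.funext fun x => by simpa only [eval_comp] using hF x y z

theorem eval_leadingCoeff_mul_pow (hF : F.IsRightSelfDistrib) (hm : F.natDegree ≠ 0)
    (y z : K) :
    F.leadingCoeff.eval z * F.leadingCoeff.eval y ^ F.natDegree =
      F.leadingCoeff.eval ((F.slice z).eval y) * F.leadingCoeff.eval z ^ F.natDegree := by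
  simpa only [coeff_comp_mul_of_natDegree_le hm (natDegree_slice_le F _)
    (natDegree_slice_le F _), coeff_slice, coeff_natDegree] using
    congrArg (coeff · (F.natDegree * F.natDegree)) (hF.slice_comp_slice y z)

theorem natDegree_leadingCoeff_eq_zero (hF : F.IsRightSelfDistrib) (hm : F.natDegree ≠ 0) :
    F.leadingCoeff.natDegree = 0 := by
  obtain ⟨n, hn⟩ : ∃ n, F.natDegree = n + 1 := ⟨_, (Nat.succ_pred_eq_of_ne_zero hm).symm⟩
  set c := F.leadingCoeff with hc
  have hc0 : c ≠ 0 := leadingCoeff_ne_zero.mpr (by rintro rfl; exact hm natDegree_zero)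
  by_contra hk
  refine hk (natDegree_eq_zero_of_eval_pow_eq (N := n + c.natDegree) (a := c.leadingCoeff ^ n)
    (by omega) fun z hz => ?_)
  have hpoly : C (c.eval z) * c ^ F.natDegree =
      C (c.eval z ^ F.natDegree) * c.comp (F.slice z) :=
    Polynomial.funext fun y => by
      simp only [eval_mul, eval_C, eval_pow, eval_comp]
      rw [hF.eval_leadingCoeff_mul_pow hm]
      ring
  have hlc := congrArg leadingCoeff hpoly
  rw [leadingCoeff_mul, leadingCoeff_C, leadingCoeff_pow, leadingCoeff_mul, leadingCoeff_C,
    leadingCoeff_comp (by rwa [natDegree_slice hz]), leadingCoeff_slice hz, ← hc, hn] at hlc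
  have hmul : c.eval z * c.leadingCoeff *
      (c.eval z ^ (n + c.natDegree) - c.leadingCoeff ^ n) = 0 := by
    linear_combination -hlc
  exact sub_eq_zero.mp ((mul_eq_zero.mp hmul).resolve_left
    (mul_ne_zero hz (leadingCoeff_ne_zero.mpr hc0)))

theorem eval_leadingCoeff_ne_zero (hF : F.IsRightSelfDistrib) (hm : F.natDegree ≠ 0)
    (y : K) :
    F.leadingCoeff.eval y ≠ 0 := by
  obtain ⟨c, hc⟩ := natDegree_eq_zero.mp (hF.natDegree_leadingCoeff_eq_zero hm)
  rw [← hc, eval_C]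
  rintro rfl
  rw [map_zero, eq_comm, leadingCoeff_eq_zero] at hc
  exact hm (by rw [hc, natDegree_zero])

theorem natDegree_slice_eq (hF : F.IsRightSelfDistrib) (hm : F.natDegree ≠ 0) (y : K) :
    (F.slice y).natDegree = F.natDegree :=
  natDegree_slice (hF.eval_leadingCoeff_ne_zero hm y)

theorem leadingCoeff_slice_eq (hF : F.IsRightSelfDistrib) (hm : F.natDegree ≠ 0)
    (y z : K) :
    (F.slice y).leadingCoeff = (F.slice z).leadingCoeff := by
  obtain ⟨c, hc⟩ := natDegree_eq_zero.mp (hF.natDegree_leadingCoeff_eq_zero hm)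
  rw [leadingCoeff_slice (hF.eval_leadingCoeff_ne_zero hm y),
    leadingCoeff_slice (hF.eval_leadingCoeff_ne_zero hm z), ← hc, eval_C, eval_C]

theorem natDegree_slice_sub_slice (hF : F.IsRightSelfDistrib) (hm : F.natDegree ≠ 0) {y z : K}
    (hyz : F.slice y ≠ F.slice z) :
    (F.natDegree - 1) * F.natDegree + (F.slice y - F.slice z).natDegree =
      (F.slice ((F.slice z).eval y) - F.slice z).natDegree * F.natDegree := by
  have hdeg := hF.natDegree_slice_eq hm
  have hdiff := natDegree_comp_sub_comp (A := F.slice z) hm (hdeg y) (hdeg z)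
    (hF.leadingCoeff_slice_eq hm y z) (by rwa [hdeg]) hyz
  rwa [hF.slice_comp_slice, ← sub_comp, natDegree_comp, hdeg, eq_comm] at hdiff

theorem natDegree_slice_sub_lt (hF : F.IsRightSelfDistrib) (hm : F.natDegree ≠ 0) {y z : K}
    (hyz : F.slice y ≠ F.slice z) : (F.slice y - F.slice z).natDegree < F.natDegree := by
  have hdeg := hF.natDegree_slice_eq hm
  have hdegree : ∀ y, (F.slice y).degree = F.natDegree := fun y =>
    (degree_eq_iff_natDegree_eq_of_pos (Nat.pos_of_ne_zero hm)).mpr (hdeg y)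
  rw [← hdeg y]
  refine natDegree_lt_natDegree (sub_ne_zero.mpr hyz) (degree_sub_lt_left
    ((hdegree y).trans (hdegree z).symm) ?_ (hF.leadingCoeff_slice_eq hm y z))
  exact ne_zero_of_natDegree_gt (n := 0) (by rw [hdeg y]; omega)

theorem slice_eq_slice (hF : F.IsRightSelfDistrib) (hm : 2 ≤ F.natDegree) (y z : K) :
    F.slice y = F.slice z := by
  have hsub : ∀ y z, (F.slice y - F.slice z).natDegree = 0 := by
    intro y z
    by_cases hyz : F.slice y = F.slice z
    · rw [hyz, sub_self, natDegree_zero]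
    have h := hF.natDegree_slice_sub_slice (by omega) hyz
    exact Nat.eq_zero_of_dvd_of_lt ((Nat.dvd_add_right (dvd_mul_left _ _)).mp
      (h ▸ dvd_mul_left _ _)) (hF.natDegree_slice_sub_lt (by omega) hyz)
  by_contra hyz
  have h := hF.natDegree_slice_sub_slice (by omega) hyz
  rw [hsub, hsub, zero_mul, add_zero, Nat.mul_eq_zero] at h
  omega

theorem classification_of_natDegree_le_one (hF : F.IsRightSelfDistrib)
    (h1 : F.natDegree ≤ 1) :
    (∃ a : K, ∀ x y, (F.slice y).eval x = a * x + (1 - a) * y) ∨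
      ∃ q : K[X], ∀ x y, (F.slice y).eval x = q.eval x := by
  obtain ⟨c, hc⟩ : ∃ c, F.coeff 1 = C c := by
    rcases h1.lt_or_eq with h0 | h1
    · exact ⟨0, by rw [coeff_eq_zero_of_natDegree_lt h0, map_zero]⟩
    · obtain ⟨c, hc⟩ := natDegree_eq_zero.mp (hF.natDegree_leadingCoeff_eq_zero (by omega))
      rw [leadingCoeff, h1] at hc
      exact ⟨c, hc.symm⟩
  set h := F.coeff 0
  have hop : ∀ x y, (F.slice y).eval x = c * x + h.eval y := fun x y => by
    rw [slice, eq_X_add_C_of_natDegree_le_one h1, hc]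
    simp [h]
  have hid : ∀ z, c * h.eval 0 + h.eval z = c * h.eval z + h.eval (h.eval z) := fun z => by
    simpa only [hop, mul_zero, zero_add] using hF 0 0 z
  have hcomp : h.comp h = C (1 - c) * h + C (c * h.eval 0) := Polynomial.funext fun z => by
    simp only [eval_comp, eval_add, eval_mul, eval_C]
    linear_combination -(hid z)
  have hval : ∀ y, h.eval y = h.coeff 1 * y + h.coeff 0 := fun y => by
    rw [eq_X_add_C_of_natDegree_le_one (natDegree_le_one_of_comp_self_eq hcomp)]
    simp
  have h₀ := hid 0
  have h₁ := hid 1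
  simp only [hval] at h₀ h₁
  by_cases he : h.coeff 1 = 0
  · exact Or.inr ⟨C c * X + C (h.coeff 0), fun x y => by simp [hop, hval, he]⟩
  · have hf : h.coeff 0 = 0 := by
      refine (mul_eq_zero.mp ?_).resolve_left he
      linear_combination -h₀
    have he' : h.coeff 1 = 1 - c := by
      refine sub_eq_zero.mp ((mul_eq_zero.mp ?_).resolve_left he)
      linear_combination -h₁ - h.coeff 1 * hf
    exact Or.inl ⟨c, fun x y => by rw [hop, hval, hf, he']; ring⟩

theorem classification (hF : F.IsRightSelfDistrib) :
    (∃ a : K, ∀ x y, (F.slice y).eval x = a * x + (1 - a) * y) ∨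
      ∃ q : K[X], ∀ x y, (F.slice y).eval x = q.eval x := by
  rcases le_or_gt F.natDegree 1 with h1 | h2
  · exact hF.classification_of_natDegree_le_one h1
  · exact Or.inr ⟨F.slice 0, fun x y => by rw [hF.slice_eq_slice h2 y 0]⟩

end IsRightSelfDistrib

theorem eval_slice_aeval {K : Type*} [Field K] (P : MvPolynomial (Fin 2) K) (x y : K) :
    ((MvPolynomial.aeval ![(X : K[X][X]), C X] P).slice y).eval x =
      MvPolynomial.eval ![x, y] P := by
  rw [slice, map_evalRingHom_eval, ← coe_aevalAeval_eq_evalEval, ← AlgHom.comp_apply,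
    MvPolynomial.comp_aeval, ← MvPolynomial.coe_aeval_eq_eval]
  exact congrArg (fun f => MvPolynomial.aeval f P) (by funext i; fin_cases i <;> simp)

end Polynomial

/-- Lemma 5.3: any real polynomial `P(x,y)` in two variables satisfying the right
self-distributivity equation `P(P(x,y),z) = P(P(x,z),P(y,z))` is either of the form
`P(x,y) = a·x + (1−a)·y` or a polynomial in the variable `x` only. -/
theorem polynomial_self_distributive_classification (P : MvPolynomial (Fin 2) ℝ)
    (hP : ∀ x y z : ℝ,
      MvPolynomial.eval ![MvPolynomial.eval ![x, y] P, z] P =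
        MvPolynomial.eval ![MvPolynomial.eval ![x, z] P, MvPolynomial.eval ![y, z] P] P) :
    (∃ a : ℝ, ∀ x y : ℝ, MvPolynomial.eval ![x, y] P = a * x + (1 - a) * y) ∨
    (∃ q : Polynomial ℝ, ∀ x y : ℝ, MvPolynomial.eval ![x, y] P = q.eval x) := by
  have hF : (MvPolynomial.aeval ![(X : ℝ[X][X]), C X] P).IsRightSelfDistrib := fun x y z => by
    simpa only [eval_slice_aeval] using hP x y z
  simpa only [eval_slice_aeval] using hF.classification
end

section
/- Let ∗ be a topological quandle structure on the closed unit interval [0,1] (so ∗ is continuous, x ∗ x = x for all x, (x ∗ y) ∗ z = (x ∗ z) ∗ (y ∗ z) for all x, y, z, and each right translation R_x : y ↦ y ∗ x is a homeomorphism of [0,1]). Suppose in addition that the operation is polynomial: there is a real polynomial P(x,y) in two variables with x ∗ y = P(x,y) for all x, y ∈ [0,1]. Then ∗ is the trivial quandle operation: x ∗ y = x for all x, y ∈ [0,1]. -/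
/-!
Write `x ∗ y = p(x, y)` with `p` a polynomial in `x` of degree `n` over `ℝ[y]`, and
`R_y = p(·, y)`. Right distributivity is the polynomial identity `R_z ∘ R_y = R_{y∗z} ∘ R_z`.
Its top coefficient gives `c(z) c(y)^n = c(y∗z) c(z)^n` for the leading coefficient `c`, and
comparing degrees in `z` shows that `c` is constant, so every difference `R_y - R_{y'}` has
degree `< n`. If `n ≥ 2` and `R_y ≠ R_{y'}`, then `R_z ∘ R_y - R_z ∘ R_{y'}` has degree
`(n - 1) n + deg (R_y - R_{y'})`, while `(R_{y∗z} - R_{y'∗z}) ∘ R_z` has degree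
`n deg (R_{y∗z} - R_{y'∗z}) ≤ (n - 1) n`. Hence `deg (R_{y∗z} - R_{y'∗z}) = n - 1 > 0`, whereas
the same argument applied to the new pair forces it to be `0`. So `R_y` does not depend on `y`
and `x ∗ y = x ∗ x = x`. If `n ≤ 1`, idempotency makes the operation affine,
`x ∗ y = t x + (1 - t) y`, and surjectivity of `R_0` on `[0, 1]` forces `t = 1`.
-/

open Polynomial Finset

namespace Polynomial

section CommSemiring

variable {R : Type*} [CommSemiring R] {A B : R[X]} {m : ℕ}

theorem natDegree_geom_sum₂_le_s13 (hA : A.natDegree ≤ m) (hB : B.natDegree ≤ m) (i : ℕ) :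
    (∑ j ∈ range i, A ^ j * B ^ (i - 1 - j)).natDegree ≤ (i - 1) * m := by
  refine natDegree_sum_le_of_forall_le _ _ fun j hj => natDegree_mul_le.trans ?_
  have hji : j + (i - 1 - j) = i - 1 := by grind
  calc _ ≤ j * m + (i - 1 - j) * m :=
        add_le_add (natDegree_pow_le_of_le j hA) (natDegree_pow_le_of_le _ hB)
    _ = (i - 1) * m := by rw [← add_mul, hji]

theorem coeff_geom_sum₂_of_natDegree_le_s13 (hA : A.natDegree ≤ m) (hB : B.natDegree ≤ m)
    (hAB : A.coeff m = B.coeff m) (i : ℕ) :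
    (∑ j ∈ range i, A ^ j * B ^ (i - 1 - j)).coeff ((i - 1) * m) = i * A.coeff m ^ (i - 1) := by
  have hterm : ∀ j ∈ range i,
      (A ^ j * B ^ (i - 1 - j)).coeff ((i - 1) * m) = A.coeff m ^ (i - 1) := by
    intro j hj
    have hji : (i - 1) * m = j * m + (i - 1 - j) * m := by
      rw [← add_mul]; congr 1; grind
    rw [hji, coeff_mul_add_eq_of_natDegree_le (natDegree_pow_le_of_le j hA)
      (natDegree_pow_le_of_le _ hB), coeff_pow_of_natDegree_le hA, coeff_pow_of_natDegree_le hB,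
      ← hAB, ← pow_add]
    congr 1; grind
  rw [finsetSum_coeff, sum_congr rfl hterm, sum_const, card_range, nsmul_eq_mul]

theorem coeff_comp_mul_self_of_natDegree_le {f g : R[X]} {n : ℕ}
    (hf : f.natDegree ≤ n) (hg : g.natDegree ≤ n) :
    (f.comp g).coeff (n * n) = f.coeff n * g.coeff n ^ n := by
  rw [comp, eval₂_eq_sum_range' C (Nat.lt_succ_of_le hf), finsetSum_coeff,
    sum_eq_single_of_mem n (self_mem_range_succ n), coeff_C_mul, coeff_pow_of_natDegree_le hg]
  intro i hi hin
  have hlt : i < n := by have := mem_range.mp hi; omega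
  rw [coeff_C_mul, coeff_eq_zero_of_natDegree_lt (p := g ^ i), mul_zero]
  exact (natDegree_pow_le_of_le i hg).trans_lt (Nat.mul_lt_mul_of_pos_right hlt (by omega))

end CommSemiring

variable {R : Type*} [CommRing R] [IsDomain R] [CharZero R]

theorem natDegree_comp_sub_comp_s13 {f A B : R[X]} (hf : f.natDegree ≠ 0) (hAB : A ≠ B)
    (hlt : (A - B).natDegree < A.natDegree) :
    (f.comp A - f.comp B).natDegree = (f.natDegree - 1) * A.natDegree + (A - B).natDegree := by
  set n := f.natDegree
  set m := A.natDegree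
  set G : ℕ → R[X] := fun i => ∑ j ∈ range i, A ^ j * B ^ (i - 1 - j)
  set S := ∑ i ∈ range (n + 1), C (f.coeff i) * G i
  have hB : B.natDegree ≤ m := by
    simpa using natDegree_sub_le_iff_left (p := A) (q := A - B) hlt.le |>.mpr le_rfl
  have hcoeff : A.coeff m = B.coeff m := by
    rw [← sub_eq_zero, ← coeff_sub, coeff_eq_zero_of_natDegree_lt hlt]
  have hfac : f.comp A - f.comp B = S * (A - B) := by
    rw [comp, comp, eval₂_eq_sum_range, eval₂_eq_sum_range, ← sum_sub_distrib, sum_mul]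
    refine sum_congr rfl fun i _ => ?_
    rw [mul_assoc, geom_sum₂_mul, mul_sub]
  have hSle : S.natDegree ≤ (n - 1) * m := by
    refine natDegree_sum_le_of_forall_le _ _ fun i hi => natDegree_C_mul_le _ _ |>.trans ?_
    refine (natDegree_geom_sum₂_le_s13 le_rfl hB i).trans (Nat.mul_le_mul_right _ ?_)
    have := mem_range.mp hi; omega
  have hStop : S.coeff ((n - 1) * m) = f.leadingCoeff * (n * A.leadingCoeff ^ (n - 1)) := by
    rw [finsetSum_coeff, sum_eq_single_of_mem n (self_mem_range_succ n)]
    · rw [coeff_C_mul, coeff_geom_sum₂_of_natDegree_le_s13 le_rfl hB hcoeff]; rfl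
    intro i hi hin
    rw [coeff_C_mul]
    rcases Nat.eq_zero_or_pos i with rfl | hi0
    · simp [G]
    have hlow : (G i).natDegree < (n - 1) * m :=
      (natDegree_geom_sum₂_le_s13 le_rfl hB i).trans_lt
        (Nat.mul_lt_mul_of_pos_right (by have := mem_range.mp hi; omega) (by omega))
    rw [coeff_eq_zero_of_natDegree_lt hlow, mul_zero]
  have hStop0 : S.coeff ((n - 1) * m) ≠ 0 := by
    have hf0 : f ≠ 0 := by rintro rfl; simp [n] at hf
    rw [hStop]
    exact mul_ne_zero (leadingCoeff_ne_zero.mpr hf0) (mul_ne_zero (Nat.cast_ne_zero.mpr hf)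
      (pow_ne_zero _ (leadingCoeff_ne_zero.mpr (ne_zero_of_natDegree_gt hlt))))
  have hS : S.natDegree = (n - 1) * m := le_antisymm hSle (le_natDegree_of_ne_zero hStop0)
  have hS0 : S ≠ 0 := fun h => hStop0 (by rw [h, coeff_zero])
  rw [hfac, natDegree_mul hS0 (sub_ne_zero.mpr hAB), hS]

end Polynomial

variable {R : Type*} [CommRing R]

/-- A bivariate polynomial `p`, with outer variable `x` and inner variable `y`, defines the
operation `x ∗ y = p(x, y)`; `rightTranslate p y` is the polynomial `x ↦ x ∗ y`. -/
noncomputable def rightTranslate (p : R[X][X]) (y : R) : R[X] := p.map (evalRingHom y)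

theorem coeff_rightTranslate (p : R[X][X]) (y : R) (i : ℕ) :
    (rightTranslate p y).coeff i = (p.coeff i).eval y :=
  coeff_map _ _

theorem natDegree_rightTranslate_le (p : R[X][X]) (y : R) :
    (rightTranslate p y).natDegree ≤ p.natDegree :=
  natDegree_map_le

theorem eval_eval_C_eq_eval_rightTranslate (p : R[X][X]) (y z : R) :
    (p.eval (C y)).eval z = (rightTranslate p z).eval y :=
  (map_evalRingHom_eval z y p).symm

theorem eval_rightTranslate_aeval (P : MvPolynomial (Fin 2) R) (x y : R) :
    (rightTranslate (MvPolynomial.aeval ![X, C X] P) y).eval x = MvPolynomial.eval ![x, y] P := by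
  induction P using MvPolynomial.induction_on with
  | C a => simp [rightTranslate]
  | add f g hf hg =>
    simp only [map_add, rightTranslate, Polynomial.map_add, eval_add] at *
    rw [hf, hg]
  | mul_X f i hf =>
    simp only [map_mul, rightTranslate, Polynomial.map_mul, eval_mul] at *
    rw [hf]; fin_cases i <;> simp

structure IsIdemRightDistribOn (p : R[X][X]) (s : Set R) : Prop where
  mapsTo : ∀ x ∈ s, ∀ y ∈ s, (rightTranslate p y).eval x ∈ s
  idem : ∀ x ∈ s, (rightTranslate p x).eval x = x
  rightDistrib : ∀ x ∈ s, ∀ y ∈ s, ∀ z ∈ s,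
    (rightTranslate p z).eval ((rightTranslate p y).eval x) =
      (rightTranslate p ((rightTranslate p z).eval y)).eval ((rightTranslate p z).eval x)

namespace IsIdemRightDistribOn

variable [IsDomain R] {p : R[X][X]} {s : Set R}

theorem comp_eq (h : IsIdemRightDistribOn p s) (hs : s.Infinite) {y z : R} (hy : y ∈ s)
    (hz : z ∈ s) :
    (rightTranslate p z).comp (rightTranslate p y) =
      (rightTranslate p ((rightTranslate p z).eval y)).comp (rightTranslate p z) :=
  eq_of_infinite_eval_eq _ _ <| hs.mono fun x hx => by
    simp only [Set.mem_ofPred_eq, eval_comp]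
    exact h.rightDistrib x hx y hy z hz

theorem eval_leadingCoeff_mul (h : IsIdemRightDistribOn p s) (hs : s.Infinite) {y z : R}
    (hy : y ∈ s) (hz : z ∈ s) :
    p.leadingCoeff.eval z * p.leadingCoeff.eval y ^ p.natDegree =
      p.leadingCoeff.eval ((rightTranslate p z).eval y) * p.leadingCoeff.eval z ^ p.natDegree := by
  have := congrArg (coeff · (p.natDegree * p.natDegree)) (h.comp_eq hs hy hz)
  simpa only [coeff_comp_mul_self_of_natDegree_le (natDegree_rightTranslate_le _ _)
    (natDegree_rightTranslate_le _ _), coeff_rightTranslate, leadingCoeff] using this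

theorem natDegree_leadingCoeff_eq_zero (h : IsIdemRightDistribOn p s) (hs : s.Infinite)
    (hn : p.natDegree ≠ 0) : p.leadingCoeff.natDegree = 0 := by
  set n := p.natDegree
  set c := p.leadingCoeff
  by_contra hc
  have hc0 : c ≠ 0 := fun h0 => hc (by rw [h0, natDegree_zero])
  have hsc : (s \ {y | c.IsRoot y}).Infinite := hs.sdiff (finite_setOfPred_isRoot hc0)
  have key : ∀ y ∈ s, c.eval y ≠ 0 → n = 1 ∧ (p.eval (C y)).natDegree = 0 := by
    intro y hy hcy
    -- compare degrees in `z` of `c(z) c(y)^n = c(y ∗ z) c(z)^n`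
    have hrel : C (c.eval y ^ n) * c = c.comp (p.eval (C y)) * c ^ n :=
      eq_of_infinite_eval_eq _ _ <| hs.mono fun z hz => by
        simp only [Set.mem_ofPred_eq, eval_mul, eval_C, eval_comp, eval_pow,
          eval_eval_C_eq_eval_rightTranslate]
        rw [mul_comm]
        exact h.eval_leadingCoeff_mul hs hy hz
    have hne : c.comp (p.eval (C y)) ≠ 0 := by
      intro h0
      rw [h0, zero_mul, mul_eq_zero] at hrel
      exact hrel.elim (C_ne_zero.mpr (pow_ne_zero _ hcy)) hc0
    have hdeg := congrArg natDegree hrel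
    rw [natDegree_C_mul (pow_ne_zero _ hcy), natDegree_mul hne (pow_ne_zero _ hc0),
      natDegree_comp, natDegree_pow] at hdeg
    have hn1 : n = 1 := by
      have : n * c.natDegree ≤ 1 * c.natDegree := by omega
      have := Nat.le_of_mul_le_mul_right this (Nat.pos_of_ne_zero hc)
      omega
    refine ⟨hn1, ?_⟩
    rw [hn1] at hdeg
    have : c.natDegree * (p.eval (C y)).natDegree = 0 := by omega
    exact (mul_eq_zero.mp this).resolve_left hc
  obtain ⟨y₀, hy₀, hcy₀⟩ := hsc.nonempty
  have hX : ∀ z ∈ s, rightTranslate p z = X := fun z hz =>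
    eq_of_infinite_eval_eq _ _ <| hsc.mono fun y hy => by
      have hconst := eq_C_of_natDegree_eq_zero (key y hy.1 hy.2).2
      have : (p.eval (C y)).eval z = (p.eval (C y)).eval y := by rw [hconst, eval_C, eval_C]
      rw [eval_eval_C_eq_eval_rightTranslate, eval_eval_C_eq_eval_rightTranslate,
        h.idem y hy.1] at this
      simpa using this
  have hc1 : c = C 1 := eq_of_infinite_eval_eq _ _ <| hs.mono fun z hz => by
    simp only [Set.mem_ofPred_eq, eval_C, c, leadingCoeff, ← coeff_rightTranslate, hX z hz]
    rw [show p.natDegree = 1 from (key y₀ hy₀ hcy₀).1, coeff_X_one]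
  exact hc (by rw [hc1, natDegree_C])

theorem rightTranslate_eq_of_two_le_natDegree (h : IsIdemRightDistribOn p s) (hs : s.Infinite)
    [CharZero R] (hn : 2 ≤ p.natDegree) {y y' : R} (hy : y ∈ s) (hy' : y' ∈ s) :
    rightTranslate p y = rightTranslate p y' := by
  set n := p.natDegree
  obtain ⟨γ, hγ⟩ : ∃ γ, p.leadingCoeff = C γ :=
    ⟨_, eq_C_of_natDegree_eq_zero (h.natDegree_leadingCoeff_eq_zero hs (by omega))⟩
  have hγ0 : γ ≠ 0 := by
    rintro rfl
    rw [C_0, leadingCoeff_eq_zero] at hγ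
    simp [n, hγ] at hn
  have hlead : ∀ w, (rightTranslate p w).coeff n = γ := fun w => by
    rw [coeff_rightTranslate, ← leadingCoeff, hγ, eval_C]
  have hdeg : ∀ w, (rightTranslate p w).natDegree = n := fun w =>
    natDegree_eq_of_le_of_coeff_ne_zero (natDegree_rightTranslate_le p w) (hlead w ▸ hγ0)
  have hsub : ∀ w w', (rightTranslate p w - rightTranslate p w').natDegree < n := by
    intro w w'
    refine (natDegree_sub_le_of_le (hdeg w).le (hdeg w').le).trans_eq (max_self n) |>.lt_of_ne
      fun heq => ?_
    have : (rightTranslate p w - rightTranslate p w').leadingCoeff = 0 := by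
      rw [leadingCoeff, heq, coeff_sub, hlead, hlead, sub_self]
    rw [leadingCoeff_eq_zero.mp this, natDegree_zero] at heq
    omega
  have step : ∀ y ∈ s, ∀ y' ∈ s, rightTranslate p y ≠ rightTranslate p y' →
      ∃ w ∈ s, ∃ w' ∈ s, rightTranslate p w ≠ rightTranslate p w' ∧
        (rightTranslate p w - rightTranslate p w').natDegree * n =
          (n - 1) * n + (rightTranslate p y - rightTranslate p y').natDegree := by
    intro y hy y' hy' hne
    refine ⟨_, h.mapsTo y hy y hy, _, h.mapsTo y' hy' y hy, ?_⟩
    have hd := natDegree_comp_sub_comp_s13 (f := rightTranslate p y) (by rw [hdeg]; omega) hne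
      ((hsub y y').trans_eq (hdeg y).symm)
    rw [h.comp_eq hs hy hy, h.comp_eq hs hy' hy, ← sub_comp, natDegree_comp, hdeg] at hd
    refine ⟨fun heq => ?_, hd⟩
    rw [heq, sub_self, natDegree_zero, zero_mul] at hd
    have : 0 < (n - 1) * n := Nat.mul_pos (by omega) (by omega)
    omega
  by_contra hne
  obtain ⟨w, hw, w', hw', hne', hk⟩ := step y hy y' hy' hne
  obtain ⟨v, -, v', -, -, hk'⟩ := step w hw w' hw' hne'
  have hvv' : (rightTranslate p v - rightTranslate p v').natDegree * n ≤ (n - 1) * n :=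
    Nat.mul_le_mul_right n (by have := hsub v v'; omega)
  have hww' : (rightTranslate p w - rightTranslate p w').natDegree = 0 := by omega
  rw [hww', zero_mul] at hk
  have : 0 < (n - 1) * n := Nat.mul_pos (by omega) (by omega)
  omega

theorem exists_affine (h : IsIdemRightDistribOn p s) (hs : s.Infinite) [CharZero R] :
    ∃ t : R, ∀ x ∈ s, ∀ y ∈ s, (rightTranslate p y).eval x = t * x + (1 - t) * y := by
  rcases Nat.lt_or_ge p.natDegree 2 with hn | hn
  · obtain ⟨t, ht⟩ : ∃ t, p.coeff 1 = C t := by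
      by_cases h1 : p.natDegree = 1
      · refine ⟨_, eq_C_of_natDegree_eq_zero ?_⟩
        rw [← h1]
        exact h.natDegree_leadingCoeff_eq_zero hs (by omega)
      · exact ⟨0, by rw [coeff_eq_zero_of_natDegree_lt (by omega), C_0]⟩
    have hlin : ∀ x y, (rightTranslate p y).eval x = (p.coeff 0).eval y + t * x := fun x y => by
      rw [eq_X_add_C_of_natDegree_le_one ((natDegree_rightTranslate_le p y).trans (by omega))]
      simp only [eval_add, eval_mul, eval_C, eval_X, coeff_rightTranslate, ht]
      ring
    refine ⟨t, fun x _ y hy => ?_⟩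
    have hidem := h.idem y hy
    rw [hlin] at hidem ⊢
    linear_combination hidem
  · refine ⟨1, fun x hx y hy => ?_⟩
    rw [h.rightTranslate_eq_of_two_le_natDegree hs hn hy hx, h.idem x hx]
    ring

end IsIdemRightDistribOn

theorem unitInterval_polynomial_quandle_trivial_general
    (op : unitInterval → unitInterval → unitInterval)
    (hidem : ∀ x, op x x = x)
    (hdist : ∀ x y z, op (op x y) z = op (op x z) (op y z))
    (hR : ∀ x : unitInterval, ∃ e : unitInterval ≃ₜ unitInterval, ∀ y, e y = op y x)
    (P : MvPolynomial (Fin 2) ℝ)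
    (hP : ∀ x y : unitInterval, (op x y : ℝ) = MvPolynomial.eval ![(x : ℝ), (y : ℝ)] P) :
    ∀ x y : unitInterval, op x y = x := by
  set p : ℝ[X][X] := MvPolynomial.aeval ![X, C X] P
  have hop (x y : unitInterval) : (op x y : ℝ) = (rightTranslate p (y : ℝ)).eval (x : ℝ) := by
    rw [hP, eval_rightTranslate_aeval]
  have hp : IsIdemRightDistribOn p unitInterval := by
    constructor
    · intro x hx y hy
      lift x to unitInterval using hx
      lift y to unitInterval using hy
      exact hop x y ▸ (op x y).2
    · intro x hx
      lift x to unitInterval using hx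
      rw [← hop, hidem]
    · intro x hx y hy z hz
      lift x to unitInterval using hx
      lift y to unitInterval using hy
      lift z to unitInterval using hz
      rw [← hop x y, ← hop, ← hop x z, ← hop y z, ← hop, hdist]
  obtain ⟨t, ht⟩ := hp.exists_affine (Set.Icc_infinite zero_lt_one)
  have haff (x y : unitInterval) : (op x y : ℝ) = t * x + (1 - t) * y :=
    (hop x y).trans (ht x x.2 y y.2)
  have ht_le : t ≤ 1 := by simpa [haff] using (op 1 0).2.2
  obtain ⟨e, he⟩ := hR 0
  obtain ⟨b, hb⟩ := e.surjective 1
  have htb : t * b = 1 := by simpa [← he, hb] using (haff b 0).symm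
  have ht1 : t = 1 := by nlinarith [mul_nonneg (sub_nonneg.2 ht_le) b.2.1, b.2.2]
  intro x y
  ext
  rw [haff, ht1]
  ring

/-- If a topological quandle structure `∗` on the closed unit interval `[0,1]` is given
by a real polynomial in two variables, then it is the trivial quandle operation
`x ∗ y = x`. -/
theorem unitInterval_polynomial_quandle_trivial
    (op : unitInterval → unitInterval → unitInterval)
    (hcont : Continuous fun p : unitInterval × unitInterval => op p.1 p.2)
    (hidem : ∀ x, op x x = x)
    (hdist : ∀ x y z, op (op x y) z = op (op x z) (op y z))
    (hR : ∀ x : unitInterval, ∃ e : unitInterval ≃ₜ unitInterval, ∀ y, e y = op y x)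
    (P : MvPolynomial (Fin 2) ℝ)
    (hP : ∀ x y : unitInterval, (op x y : ℝ) = MvPolynomial.eval ![(x : ℝ), (y : ℝ)] P) :
    ∀ x y : unitInterval, op x y = x :=
  unitInterval_polynomial_quandle_trivial_general op hidem hdist hR P hP
end

section
/- The function x ↦ ln(1−x)/ln(x) is strictly increasing on the open interval (0,1): for all real numbers s, t with 0 < s < t < 1 one has ln(1−s)/ln(s) < ln(1−t)/ln(t). -/
/-- The function `x ↦ ln(1−x)/ln(x)` is strictly increasing on `(0,1)`. -/
theorem log_one_sub_div_log_strictMonoOn (s t : ℝ) (hs : 0 < s) (hst : s < t) (ht : t < 1) :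
    Real.log (1 - s) / Real.log s < Real.log (1 - t) / Real.log t := by
  have hs1 : s < 1 := hst.trans ht
  have ht0 : 0 < t := hs.trans hst
  have hls : Real.log s < 0 := Real.log_neg hs hs1
  have hlt : Real.log t < 0 := Real.log_neg ht0 ht
  have h1t : 0 < 1 - t := by linarith
  have hl1s : Real.log (1 - s) < 0 := Real.log_neg (by linarith) (by linarith)
  have hl1t : Real.log (1 - t) < 0 := Real.log_neg h1t (by linarith)
  have hst' : Real.log s < Real.log t := Real.log_lt_log hs hst
  have h1st : Real.log (1 - t) < Real.log (1 - s) := Real.log_lt_log h1t (by linarith)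
  rw [show Real.log (1 - s) / Real.log s = (-Real.log (1 - s)) / (-Real.log s) by
        rw [neg_div_neg_eq],
      show Real.log (1 - t) / Real.log t = (-Real.log (1 - t)) / (-Real.log t) by
        rw [neg_div_neg_eq],
      div_lt_div_iff₀ (by linarith) (by linarith)]
  nlinarith [mul_pos (neg_pos.2 hl1t) (neg_pos.2 hls)]
end

section
/- The function x ↦ ln((x−1)²)/ln(x) is strictly increasing on the open interval (1, +∞): for all real numbers s, t with 1 < s < t one has ln((s−1)²)/ln(s) < ln((t−1)²)/ln(t). -/
/-- The function `x ↦ ln((x−1)²)/ln(x)` is strictly increasing on `(1, +∞)`. -/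
theorem log_sq_sub_one_div_log_strictMonoOn (s t : ℝ) (hs : 1 < s) (hst : s < t) :
    Real.log ((s - 1) ^ 2) / Real.log s < Real.log ((t - 1) ^ 2) / Real.log t := by
  have ht1 : 1 < t := hs.trans hst
  have hs0 : 0 < s - 1 := by linarith
  have ht0 : 0 < t - 1 := by linarith
  have hlogs : 0 < Real.log s := Real.log_pos hs
  have hlogt : 0 < Real.log t := Real.log_pos ht1
  have hlst : Real.log s < Real.log t := Real.log_lt_log (by linarith) hst
  have hA : Real.log (s / (s - 1)) = Real.log s - Real.log (s - 1) :=
    Real.log_div (by positivity) (ne_of_gt hs0)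
  have hB : Real.log (t / (t - 1)) = Real.log t - Real.log (t - 1) :=
    Real.log_div (by positivity) (ne_of_gt ht0)
  have hBpos : 0 < Real.log (t / (t - 1)) :=
    Real.log_pos (by rw [lt_div_iff₀ ht0]; linarith)
  have hAB : Real.log (t / (t - 1)) < Real.log (s / (s - 1)) :=
    Real.log_lt_log (by positivity) (by rw [div_lt_div_iff₀ ht0 hs0]; nlinarith)
  rw [Real.log_pow, Real.log_pow, div_lt_div_iff₀ hlogs hlogt]
  push_cast
  nlinarith [mul_lt_mul_of_pos_right hAB hlogt,
    mul_lt_mul_of_pos_left hlst hBpos]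
end
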